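/- If a, b, c are positive reals linearly independent over ℚ, then the box a×b×c cannot be partitioned into finitely many boxes each having at most 2 distinct side lengths. -/

import Mathlib

/-- An axis-parallel box in ℝⁿ with positive side lengths. -/
structure Box (n : ℕ) where
  lower : Fin n → ℝ
  upper : Fin n → ℝ
  lower_lt_upper : ∀ i, lower i < upper i

namespace Box

/-- The closed box as a subset of ℝⁿ. -/
def toSet {n : ℕ} (B : Box n) : Set (Fin n → ℝ) :=
  Set.univ.pi fun i => Set.Icc (B.lower i) (B.upper i)

/-- The open interior of the box. -/
def interiorSet {n : ℕ} (B : Box n) : Set (Fin n → ℝ) :=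
  Set.univ.pi fun i => Set.Ioo (B.lower i) (B.upper i)

/-- The side length of the box in direction `i`. -/
def side {n : ℕ} (B : Box n) (i : Fin n) : ℝ := B.upper i - B.lower i

end Box

/-- The boxes `t` form a finite partition (dissection) of `B`:
pairwise disjoint interiors, and their union covers `B`. -/
def IsDissection {n m : ℕ} (B : Box n) (t : Fin m → Box n) : Prop :=
  (∀ i j, i ≠ j → Disjoint (t i).interiorSet (t j).interiorSet) ∧
  (⋃ i, (t i).toSet) = B.toSet

/-- `P` is cut by a hyperplane parallel to a pair of its faces into `P₁` and `P₂`. -/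
def IsSplit {n : ℕ} (P P₁ P₂ : Box n) : Prop :=
  ∃ (j : Fin n) (c : ℝ), P.lower j < c ∧ c < P.upper j ∧
    P₁.lower = P.lower ∧ P₁.upper = Function.update P.upper j c ∧
    P₂.lower = Function.update P.lower j c ∧ P₂.upper = P.upper

/-! For additive maps `f k : ℝ → R`, the quantity `∏ k, f k (side k)` is additive under cutting a
box by a hyperplane, so its sum over the pieces of a dissection is its value on the whole box; by
multilinearity the same holds for the determinant `det (φ k (side l))`. Linear independence of the
sides of the big box over `ℚ` gives `ℚ`-linear `φ` with `φ k (side l) = δ k l`, making that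
determinant `1`, while a piece with a repeated side length has two equal columns and determinant
`0`. -/

open Filter Topology

theorem LinearIndependent.exists_linearMap_apply_eq_single {K V ι : Type*} [DivisionRing K]
    [AddCommGroup V] [Module K V] {v : ι → V} (hv : LinearIndependent K v) :
    ∃ g : V →ₗ[K] ι →₀ K, ∀ i, g (v i) = Finsupp.single i 1 := by
  obtain ⟨g, hg⟩ := LinearMap.exists_extend hv.repr
  refine ⟨g, fun i => ?_⟩
  have := congr($hg ⟨v i, Submodule.subset_span (Set.mem_range_self i)⟩)
  simpa [hv.repr_eq_single i] using this

lemma tendsto_sub_nhdsGT_zero (a : ℝ) : Tendsto (fun ε => a - ε) (𝓝[>] 0) (𝓝 a) :=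
  ((continuous_sub_left a).tendsto' 0 a (sub_zero a)).mono_left nhdsWithin_le_nhds

namespace BoxIntegral.BoxAdditiveMap

variable {ι R : Type*} [Fintype ι] [CommSemiring R]

lemma prod_update_sub_add_prod_sub_update [DecidableEq ι] (f : ι → ℝ →+ R)
    (l u : ι → ℝ) (i : ι) (x : ℝ) :
    ∏ k, f k (Function.update u i x k - l k) + ∏ k, f k (u k - Function.update l i x k) =
      ∏ k, f k (u k - l k) := by
  have hsplit : ∀ g : ι → ℝ, ∏ k, f k (g k) = f i (g i) * ∏ k ∈ Finset.univ.erase i, f k (g k) :=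
    fun g => (Finset.mul_prod_erase _ (fun k => f k (g k)) (Finset.mem_univ i)).symm
  have hrest : ∀ g : ι → ℝ, (∀ k ≠ i, g k = u k - l k) →
      ∏ k ∈ Finset.univ.erase i, f k (g k) = ∏ k ∈ Finset.univ.erase i, f k (u k - l k) :=
    fun g hg => Finset.prod_congr rfl fun k hk => by rw [hg k (Finset.ne_of_mem_erase hk)]
  rw [hsplit, hsplit (fun k => u k - Function.update l i x k), hsplit,
    hrest (fun k => Function.update u i x k - l k) fun k hk => by simp [hk],
    hrest (fun k => u k - Function.update l i x k) fun k hk => by simp [hk], ← add_mul, ← map_add]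
  simp only [Function.update_self, sub_add_sub_cancel']

def prodSides (f : ι → ℝ →+ R) : ι →ᵇᵃ R :=
  ofMapSplitAdd (fun I => ∏ k, f k (I.upper k - I.lower k)) ⊤ fun I _ i x hx => by
    classical
    rw [Box.splitLower_def hx, Box.splitUpper_def hx]
    exact prod_update_sub_add_prod_sub_update f I.lower I.upper i x

lemma prodSides_apply (f : ι → ℝ →+ R) (I : Box ι) :
    prodSides f I = ∏ k, f k (I.upper k - I.lower k) := rfl

end BoxIntegral.BoxAdditiveMap

namespace Box

variable {n : ℕ}

@[simps]
def toBoxIntegral (P : Box n) : BoxIntegral.Box (Fin n) := ⟨P.lower, P.upper, P.lower_lt_upper⟩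

lemma mem_toBoxIntegral {P : Box n} {x : Fin n → ℝ} :
    x ∈ P.toBoxIntegral ↔ ∀ k, x k ∈ Set.Ioc (P.lower k) (P.upper k) := Iff.rfl

lemma toBoxIntegral_le_toBoxIntegral {P Q : Box n} (h : P.toSet ⊆ Q.toSet) :
    P.toBoxIntegral ≤ Q.toBoxIntegral := by
  have hl : P.lower ∈ Q.toSet := h fun k _ => ⟨le_rfl, (P.lower_lt_upper k).le⟩
  have hu : P.upper ∈ Q.toSet := h fun k _ => ⟨(P.lower_lt_upper k).le, le_rfl⟩
  exact BoxIntegral.Box.le_iff_bounds.2 ⟨fun k => (hl k trivial).1, fun k => (hu k trivial).2⟩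

lemma disjoint_toBoxIntegral_iff {P Q : Box n} :
    Disjoint (P.toBoxIntegral : Set (Fin n → ℝ)) Q.toBoxIntegral ↔
      Disjoint P.interiorSet Q.interiorSet := by
  simp only [BoxIntegral.Box.coe_eq_pi, interiorSet, Set.disjoint_iff_inter_eq_empty,
    ← Set.pi_inter_distrib, Set.univ_pi_eq_empty_iff, Set.Ioc_inter_Ioc, Set.Ioo_inter_Ioo,
    Set.Ioc_eq_empty_iff, Set.Ioo_eq_empty_iff, toBoxIntegral_lower, toBoxIntegral_upper]

lemma eventually_mem_toBoxIntegral_of_sub_mem (P : Box n) (x : Fin n → ℝ) :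
    ∀ᶠ ε in 𝓝[>] (0 : ℝ), (fun k => x k - ε) ∈ P.toSet → x ∈ P.toBoxIntegral := by
  by_cases hx : ∀ k, x k ≤ P.upper k
  · filter_upwards [self_mem_nhdsWithin] with ε (hε : 0 < ε) hmem
    refine mem_toBoxIntegral.2 fun k => ?_
    exact ⟨by linarith [(hmem k trivial).1], hx k⟩
  · push Not at hx
    obtain ⟨k, hk⟩ := hx
    filter_upwards [(tendsto_sub_nhdsGT_zero (x k)).eventually (lt_mem_nhds hk)] with ε hε hmem
    exact absurd (hmem k trivial).2 hε.not_ge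

end Box

namespace IsDissection

variable {n m : ℕ} {B : Box n} {t : Fin m → Box n}

lemma injective_toBoxIntegral (hd : IsDissection B t) :
    Function.Injective fun i => (t i).toBoxIntegral := by
  intro i j hij
  by_contra hne
  have hdisj := Box.disjoint_toBoxIntegral_iff.2 (hd.1 i j hne)
  rw [show (t i).toBoxIntegral = (t j).toBoxIntegral from hij, disjoint_self] at hdisj
  exact (t j).toBoxIntegral.coe_ne_empty hdisj

/-- Pieces are closed while `BoxIntegral` boxes are half-open: for small `ε > 0` the point
`x - ε` lies in some closed piece, whose half-open box then contains `x`. -/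
lemma exists_mem_toBoxIntegral (hd : IsDissection B t) {x : Fin n → ℝ}
    (hx : x ∈ B.toBoxIntegral) : ∃ i, x ∈ (t i).toBoxIntegral := by
  have hB : ∀ᶠ ε in 𝓝[>] (0 : ℝ), (fun k => x k - ε) ∈ B.toSet := by
    have hlower : ∀ k, ∀ᶠ ε in 𝓝[>] (0 : ℝ), B.lower k < x k - ε := fun k =>
      (tendsto_sub_nhdsGT_zero (x k)).eventually (lt_mem_nhds (Box.mem_toBoxIntegral.1 hx k).1)
    filter_upwards [eventually_all.2 hlower, self_mem_nhdsWithin] with ε hlow (hε : 0 < ε) k _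
    exact ⟨(hlow k).le, by linarith [(Box.mem_toBoxIntegral.1 hx k).2]⟩
  obtain ⟨ε, hεB, hεt⟩ :=
    (hB.and (eventually_all.2 fun i => (t i).eventually_mem_toBoxIntegral_of_sub_mem x)).exists
  rw [← hd.2, Set.mem_iUnion] at hεB
  obtain ⟨i, hi⟩ := hεB
  exact ⟨i, hεt i hi⟩

def prepartition (hd : IsDissection B t) : BoxIntegral.Prepartition B.toBoxIntegral where
  boxes := Finset.univ.map ⟨_, hd.injective_toBoxIntegral⟩
  le_of_mem' := by
    simp only [Finset.mem_map, Finset.mem_univ, true_and, Function.Embedding.coeFn_mk,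
      forall_exists_index, forall_apply_eq_imp_iff]
    exact fun i =>
      Box.toBoxIntegral_le_toBoxIntegral (hd.2 ▸ Set.subset_iUnion (fun i => (t i).toSet) i)
  pairwiseDisjoint := by
    simp only [Finset.coe_map, Finset.coe_univ, Set.image_univ, Function.Embedding.coeFn_mk]
    rintro _ ⟨i, rfl⟩ _ ⟨j, rfl⟩ hne
    exact Box.disjoint_toBoxIntegral_iff.2 (hd.1 i j fun h => hne (by rw [h]))

lemma isPartition_prepartition (hd : IsDissection B t) : hd.prepartition.IsPartition := by
  intro x hx
  obtain ⟨i, hi⟩ := hd.exists_mem_toBoxIntegral hx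
  exact ⟨_, Finset.mem_map_of_mem _ (Finset.mem_univ i), hi⟩

theorem sum_prod_side {R : Type*} [CommSemiring R] (hd : IsDissection B t) (f : Fin n → ℝ →+ R) :
    ∑ i, ∏ k, f k ((t i).side k) = ∏ k, f k (B.side k) := by
  simpa [prepartition, Finset.sum_map, BoxIntegral.BoxAdditiveMap.prodSides_apply, Box.side] using
    (BoxIntegral.BoxAdditiveMap.prodSides f).sum_partition_boxes le_top hd.isPartition_prepartition

theorem sum_det {R : Type*} [CommRing R] (hd : IsDissection B t) (φ : Fin n → ℝ →+ R) :
    ∑ i, (Matrix.of fun k l => φ k ((t i).side l)).det =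
      (Matrix.of fun k l => φ k (B.side l)).det := by
  simp only [Matrix.det_apply, Matrix.of_apply]
  rw [Finset.sum_comm]
  exact Finset.sum_congr rfl fun σ _ => by rw [← Finset.smul_sum, hd.sum_prod_side fun k => φ (σ k)]

theorem exists_injective_side (hd : IsDissection B t) (hB : LinearIndependent ℚ B.side) :
    ∃ i, Function.Injective (t i).side := by
  by_contra! hnot
  obtain ⟨g, hg⟩ := hB.exists_linearMap_apply_eq_single
  let φ : Fin n → ℝ →+ ℚ := fun k => (Finsupp.applyAddHom k).comp g.toAddMonoidHom
  have hpiece : ∀ i, (Matrix.of fun k l => φ k ((t i).side l)).det = 0 := fun i => by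
    obtain ⟨l₁, l₂, hside, hne⟩ := Function.not_injective_iff.1 (hnot i)
    exact Matrix.det_zero_of_column_eq hne fun k => by simp [hside]
  have hbox : (Matrix.of fun k l => φ k (B.side l)) = 1 := by
    ext k l
    simp [φ, hg, Finsupp.single_apply, Matrix.one_apply, eq_comm]
  simpa [hpiece, hbox] using hd.sum_det φ

end IsDissection

theorem no_bar_partition_of_linearIndependent_general (a b c : ℝ)
    (hli : LinearIndependent ℚ ![a, b, c]) :
    ∀ B : Box 3, B.side = ![a, b, c] →
      ¬ ∃ (m : ℕ) (t : Fin m → Box 3), IsDissection B t ∧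
        ∀ i, (Finset.univ.image (t i).side).card ≤ 2 := by
  rintro B hside ⟨m, t, hd, hbar⟩
  obtain ⟨i, hinj⟩ := hd.exists_injective_side (hside ▸ hli)
  have hcard := Finset.card_image_of_injective Finset.univ hinj
  simp only [Finset.card_univ, Fintype.card_fin] at hcard
  exact absurd (hbar i) (by omega)

/-- If `a, b, c` are linearly independent over `ℚ` then the box `a × b × c`
cannot be partitioned into bars. -/
theorem no_bar_partition_of_linearIndependent (a b c : ℝ)
    (ha : 0 < a) (hb : 0 < b) (hc : 0 < c)
    (hli : LinearIndependent ℚ ![a, b, c]) :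
    ∀ B : Box 3, B.side = ![a, b, c] →
      ¬ ∃ (m : ℕ) (t : Fin m → Box 3), IsDissection B t ∧
        ∀ i, (Finset.univ.image (t i).side).card ≤ 2 :=
  no_bar_partition_of_linearIndependent_general a b c hli
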